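/- For any vector a ∈ ℝⁿ, matrix F ∈ ℝ^{p×n}, vectors b ∈ ℝᵖ and ε > 0, the maximum of (1/n)·zᵀa over z ∈ [-1,1]ⁿ satisfying ‖(1/n)Fz − b‖_∞ ≤ ε equals the minimum over σ ∈ ℝᵖ of (−bᵀσ + (1/n)‖Fᵀσ + a‖₁ + ε‖σ‖₁), provided the constraint set is nonempty. -/

import Mathlib

/-!
Weak duality is Hölder's inequality for the pairing of `ℓ^∞` with `ℓ^1`: introducing a slack
vector `u` in the box `[-ε, ε]^p`, the Lagrangian `(1/n) zᵀa + ((1/n) F z + u - b)ᵀσ` over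
`z ∈ [-1, 1]^n` is at most the dual objective at `σ`, with equality at `z = sign (Fᵀσ + a)`,
`u = ε sign σ`.

For strong duality, the primal maximum `M` is attained on the compact feasible set. The compact
convex set of pairs `((1/n) F z + u, (1/n) zᵀa)` meets the line above `b` only at heights `≤ M`,
so a hyperplane strictly separates it from `(b, M + δ)`. Since `(b, M)` lies in the set, the
hyperplane is not vertical; normalising its normal to `(σ, 1)` gives a dual point of value
`< M + δ`.
-/

open Finset

theorem Convex.exists_snd_add_strongDual_lt {V : Type*} [AddCommGroup V] [Module ℝ V]
    [TopologicalSpace V] [IsTopologicalAddGroup V] [ContinuousSMul ℝ V] [LocallyConvexSpace ℝ V]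
    {P : Set (V × ℝ)} (hconv : Convex ℝ P) (hclosed : IsClosed P) {c : V} {t₀ M δ : ℝ}
    (h₀ : (c, t₀) ∈ P) (hM : ∀ t, (c, t) ∈ P → t ≤ M) (hδ : 0 < δ) :
    ∃ σ : StrongDual ℝ V, ∀ q ∈ P, q.2 + σ (q.1 - c) < M + δ := by
  have hout : (c, M + δ) ∉ P := fun h => by linarith [hM _ h]
  obtain ⟨f, r, hfP, hrf⟩ := geometric_hahn_banach_closed_point hconv hclosed hout
  set σ₀ := f.comp (ContinuousLinearMap.inl ℝ V ℝ)
  set s := f (0, 1)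
  have hf : ∀ q : V × ℝ, f q = σ₀ q.1 + q.2 * s := fun q => by
    conv_lhs => rw [show q = (q.1, 0) + q.2 • ((0 : V), (1 : ℝ)) by ext <;> simp]
    rw [map_add, map_smul, smul_eq_mul]
    rfl
  have hs : 0 < s := by
    have := (hfP _ h₀).trans hrf
    rw [hf, hf] at this
    nlinarith [hM _ h₀]
  refine ⟨s⁻¹ • σ₀, fun q hq => ?_⟩
  have := (hfP q hq).trans hrf
  rw [hf, hf] at this
  have hσ : (s⁻¹ • σ₀) (q.1 - c) = (σ₀ q.1 - σ₀ c) / s := by simp [div_eq_inv_mul]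
  rw [hσ, ← lt_sub_iff_add_lt', div_lt_iff₀ hs]
  linarith

theorem sum_mul_le_mul_sum_abs {ι : Type*} [Fintype ι] {x y : ι → ℝ} {r : ℝ}
    (hx : ∀ i, |x i| ≤ r) : ∑ i, x i * y i ≤ r * ∑ i, |y i| := by
  rw [mul_sum]
  refine sum_le_sum fun i _ => ?_
  calc x i * y i ≤ |x i| * |y i| := by rw [← abs_mul]; exact le_abs_self _
    _ ≤ r * |y i| := by gcongr; exact hx i

theorem abs_sign_le_one (y : ℝ) : |(SignType.sign y : ℝ)| ≤ 1 := by
  rcases lt_trichotomy y 0 with h | h | h <;> simp [h]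

namespace BoxConstrainedLP

noncomputable section

variable {p n : ℕ} (F : Matrix (Fin p) (Fin n) ℝ) (b : Fin p → ℝ) (a : Fin n → ℝ) (ε : ℝ)

def feasibleSet : Set (Fin n → ℝ) :=
  {z | (∀ j, |z j| ≤ 1) ∧ ∀ i, |(1 / (n : ℝ)) * (∑ j, F i j * z j) - b i| ≤ ε}

def primalObjective (z : Fin n → ℝ) : ℝ := (1 / (n : ℝ)) * ∑ j, z j * a j

def dualObjective (σ : Fin p → ℝ) : ℝ :=
  -(∑ i, b i * σ i) + (1 / (n : ℝ)) * (∑ j, |(∑ i, F i j * σ i) + a j|) + ε * ∑ i, |σ i|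

def lagrangian (σ : Fin p → ℝ) (z : Fin n → ℝ) (u : Fin p → ℝ) : ℝ :=
  primalObjective a z + ∑ i, ((1 / (n : ℝ)) * (∑ j, F i j * z j) + u i - b i) * σ i

-- `Fin n → ℝ` carries the sup norm, so these balls are the boxes `[-1, 1]^n` and `[-ε, ε]^p`.
def slackBox : Set ((Fin n → ℝ) × (Fin p → ℝ)) :=
  Metric.closedBall 0 1 ×ˢ Metric.closedBall 0 ε

def constraintObjective (x : (Fin n → ℝ) × (Fin p → ℝ)) : (Fin p → ℝ) × ℝ :=
  (fun i => (1 / (n : ℝ)) * (∑ j, F i j * x.1 j) + x.2 i, primalObjective a x.1)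

theorem continuous_primalObjective : Continuous (primalObjective a) := by
  unfold primalObjective
  fun_prop

theorem isCompact_slackBox : IsCompact (slackBox (n := n) (p := p) ε) :=
  (isCompact_closedBall _ _).prod (isCompact_closedBall _ _)

theorem convex_slackBox : Convex ℝ (slackBox (n := n) (p := p) ε) :=
  (convex_closedBall _ _).prod (convex_closedBall _ _)

theorem isLinearMap_constraintObjective : IsLinearMap ℝ (constraintObjective F a) := by
  constructor
  · intro x y
    ext <;> simp only [constraintObjective, primalObjective, Prod.fst_add, Prod.snd_add,
      Pi.add_apply, mul_add, add_mul, sum_add_distrib]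
    ring
  · intro c x
    ext <;> simp only [constraintObjective, primalObjective, Prod.smul_fst, Prod.smul_snd,
      Pi.smul_apply, smul_eq_mul, mul_assoc, mul_left_comm _ c, ← mul_sum]
    ring

theorem lagrangian_eq (σ : Fin p → ℝ) (z : Fin n → ℝ) (u : Fin p → ℝ) :
    lagrangian F b a σ z u = -(∑ i, b i * σ i)
      + (1 / (n : ℝ)) * ∑ j, z j * ((∑ i, F i j * σ i) + a j) + ∑ i, u i * σ i := by
  have hswap : ∑ i, (1 / (n : ℝ)) * (∑ j, F i j * z j) * σ i
      = (1 / (n : ℝ)) * ∑ j, z j * ∑ i, F i j * σ i := by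
    simp only [mul_sum, sum_mul]
    rw [sum_comm]
    exact sum_congr rfl fun _ _ => sum_congr rfl fun _ _ => by ring
  have hsplit : ∑ i, ((1 / (n : ℝ)) * (∑ j, F i j * z j) + u i - b i) * σ i
      = ∑ i, (1 / (n : ℝ)) * (∑ j, F i j * z j) * σ i + ∑ i, u i * σ i - ∑ i, b i * σ i := by
    rw [← sum_add_distrib, ← sum_sub_distrib]
    exact sum_congr rfl fun _ _ => by ring
  rw [lagrangian, hsplit, hswap, primalObjective]
  simp only [mul_add, sum_add_distrib]
  ring

variable {F b a ε}

theorem mem_slackBox_iff (hε : 0 ≤ ε) {x : (Fin n → ℝ) × (Fin p → ℝ)} :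
    x ∈ slackBox ε ↔ (∀ j, |x.1 j| ≤ 1) ∧ ∀ i, |x.2 i| ≤ ε := by
  simp [slackBox, pi_norm_le_iff_of_nonneg, hε]

theorem lagrangian_le_dualObjective (σ : Fin p → ℝ) {z : Fin n → ℝ} {u : Fin p → ℝ}
    (hz : ∀ j, |z j| ≤ 1) (hu : ∀ i, |u i| ≤ ε) :
    lagrangian F b a σ z u ≤ dualObjective F b a ε σ := by
  rw [lagrangian_eq, dualObjective]
  have hzw := sum_mul_le_mul_sum_abs (y := fun j => (∑ i, F i j * σ i) + a j) hz
  rw [one_mul] at hzw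
  gcongr
  exact sum_mul_le_mul_sum_abs hu

theorem lagrangian_sign_eq_dualObjective (σ : Fin p → ℝ) :
    lagrangian F b a σ (fun j => SignType.sign ((∑ i, F i j * σ i) + a j))
      (fun i => ε * SignType.sign (σ i)) = dualObjective F b a ε σ := by
  simp only [lagrangian_eq, dualObjective, mul_assoc, ← mul_sum, sign_mul_self]

theorem sign_mem_slackBox (hε : 0 ≤ ε) (w : Fin n → ℝ) (σ : Fin p → ℝ) :
    ((fun j => (SignType.sign (w j) : ℝ)), fun i => ε * SignType.sign (σ i)) ∈ slackBox ε := by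
  refine (mem_slackBox_iff hε).2 ⟨fun _ => abs_sign_le_one _, fun _ => ?_⟩
  rw [abs_mul, abs_of_nonneg hε]
  exact mul_le_of_le_one_right hε (abs_sign_le_one _)

theorem primalObjective_le_dualObjective {z : Fin n → ℝ} (hz : z ∈ feasibleSet F b ε)
    (σ : Fin p → ℝ) : primalObjective a z ≤ dualObjective F b a ε σ := by
  set u : Fin p → ℝ := fun i => b i - (1 / (n : ℝ)) * ∑ j, F i j * z j
  have hu : ∀ i, |u i| ≤ ε := fun i => by rw [abs_sub_comm]; exact hz.2 i
  calc primalObjective a z = lagrangian F b a σ z u := by simp [lagrangian, u]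
    _ ≤ dualObjective F b a ε σ := lagrangian_le_dualObjective σ hz.1 hu

theorem isCompact_feasibleSet : IsCompact (feasibleSet F b ε) := by
  refine (isCompact_closedBall (0 : Fin n → ℝ) 1).of_isClosed_subset ?_ fun z hz => ?_
  · simp only [feasibleSet, Set.ofPred_and, Set.ofPred_forall]
    exact (isClosed_iInter fun j => isClosed_le (by fun_prop) continuous_const).inter
      (isClosed_iInter fun i => isClosed_le (by fun_prop) continuous_const)
  · simpa [pi_norm_le_iff_of_nonneg] using hz.1

theorem mem_image_slackBox_of_mem_feasibleSet (hε : 0 ≤ ε) {z : Fin n → ℝ}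
    (hz : z ∈ feasibleSet F b ε) :
    (b, primalObjective a z) ∈ constraintObjective F a '' slackBox ε := by
  refine ⟨(z, fun i => b i - (1 / (n : ℝ)) * ∑ j, F i j * z j),
    (mem_slackBox_iff hε).2 ⟨hz.1, fun i => ?_⟩, by ext <;> simp [constraintObjective]⟩
  rw [abs_sub_comm]
  exact hz.2 i

theorem le_of_mem_image_slackBox (hε : 0 ≤ ε) {zs : Fin n → ℝ}
    (hmax : IsMaxOn (primalObjective a) (feasibleSet F b ε) zs) {t : ℝ}
    (ht : (b, t) ∈ constraintObjective F a '' slackBox ε) : t ≤ primalObjective a zs := by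
  obtain ⟨x, hx, hxt⟩ := ht
  obtain ⟨hx₁, hx₂⟩ := (mem_slackBox_iff hε).1 hx
  have hobj : primalObjective a x.1 = t := congr_arg Prod.snd hxt
  refine hobj ▸ hmax ⟨hx₁, fun i => ?_⟩
  have hb : (1 / (n : ℝ)) * (∑ j, F i j * x.1 j) + x.2 i = b i :=
    congr_fun (congr_arg Prod.fst hxt) i
  rw [← hb, sub_add_cancel_left, abs_neg]
  exact hx₂ i

theorem exists_dualObjective_lt (hε : 0 ≤ ε) {zs : Fin n → ℝ} (hzs : zs ∈ feasibleSet F b ε)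
    (hmax : IsMaxOn (primalObjective a) (feasibleSet F b ε) zs) {δ : ℝ} (hδ : 0 < δ) :
    ∃ σ, dualObjective F b a ε σ < primalObjective a zs + δ := by
  have hlin := isLinearMap_constraintObjective F a
  obtain ⟨σ, hσ⟩ := Convex.exists_snd_add_strongDual_lt
    ((convex_slackBox ε).is_linear_image hlin)
    ((isCompact_slackBox ε).image (hlin.mk' _).continuous_of_finiteDimensional).isClosed
    (mem_image_slackBox_of_mem_feasibleSet hε hzs) (fun _ => le_of_mem_image_slackBox hε hmax) hδ
  set σv : Fin p → ℝ := fun i => σ fun j => if i = j then 1 else 0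
  refine ⟨σv, ?_⟩
  rw [← lagrangian_sign_eq_dualObjective]
  convert hσ _ ⟨_, sign_mem_slackBox hε (fun j => (∑ i, F i j * σv i) + a j) σv, rfl⟩ using 1
  exact congrArg (_ + ·) (LinearMap.pi_apply_eq_sum_univ (σ : (Fin p → ℝ) →ₗ[ℝ] ℝ) _).symm

end

end BoxConstrainedLP

theorem stmt1_general (p n : ℕ) (F : Matrix (Fin p) (Fin n) ℝ)
    (b : Fin p → ℝ) (a : Fin n → ℝ) (ε : ℝ) (hε : 0 < ε)
    (hne : ∃ z : Fin n → ℝ, (∀ j, |z j| ≤ 1) ∧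
      ∀ i, |(1 / (n : ℝ)) * (∑ j, F i j * z j) - b i| ≤ ε) :
    sSup {v : ℝ | ∃ z : Fin n → ℝ, (∀ j, |z j| ≤ 1) ∧
        (∀ i, |(1 / (n : ℝ)) * (∑ j, F i j * z j) - b i| ≤ ε) ∧
        v = (1 / (n : ℝ)) * ∑ j, z j * a j} =
    sInf {v : ℝ | ∃ σ : Fin p → ℝ,
        v = -(∑ i, b i * σ i) + (1 / (n : ℝ)) * (∑ j, |(∑ i, F i j * σ i) + a j|)
            + ε * ∑ i, |σ i|} := by
  obtain ⟨zs, hzs, hmax⟩ :=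
    BoxConstrainedLP.isCompact_feasibleSet.exists_isMaxOn hne
      (BoxConstrainedLP.continuous_primalObjective a).continuousOn
  rw [IsGreatest.csSup_eq (a := BoxConstrainedLP.primalObjective a zs) ?greatest, eq_comm]
  case greatest =>
    refine ⟨⟨zs, hzs.1, hzs.2, rfl⟩, ?_⟩
    rintro _ ⟨z, hz₁, hz₂, rfl⟩
    exact hmax ⟨hz₁, hz₂⟩
  refine csInf_eq_of_forall_ge_of_forall_gt_exists_lt ⟨_, 0, rfl⟩ ?_ fun w hw => ?_
  · rintro _ ⟨σ, rfl⟩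
    exact BoxConstrainedLP.primalObjective_le_dualObjective hzs σ
  · obtain ⟨σ, hσ⟩ := BoxConstrainedLP.exists_dualObjective_lt hε.le hzs hmax (sub_pos.2 hw)
    exact ⟨BoxConstrainedLP.dualObjective F b a ε σ, ⟨σ, rfl⟩, by rwa [add_sub_cancel] at hσ⟩

/-- Strong duality between an `L∞`-norm-constrained linear maximization over the box
`[-1,1]^n` and an `L1`-regularized dual minimization. -/
theorem stmt1 (p n : ℕ) (hn : 0 < n) (F : Matrix (Fin p) (Fin n) ℝ)
    (b : Fin p → ℝ) (a : Fin n → ℝ) (ε : ℝ) (hε : 0 < ε)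
    (hne : ∃ z : Fin n → ℝ, (∀ j, |z j| ≤ 1) ∧
      ∀ i, |(1 / (n : ℝ)) * (∑ j, F i j * z j) - b i| ≤ ε) :
    sSup {v : ℝ | ∃ z : Fin n → ℝ, (∀ j, |z j| ≤ 1) ∧
        (∀ i, |(1 / (n : ℝ)) * (∑ j, F i j * z j) - b i| ≤ ε) ∧
        v = (1 / (n : ℝ)) * ∑ j, z j * a j} =
    sInf {v : ℝ | ∃ σ : Fin p → ℝ,
        v = -(∑ i, b i * σ i) + (1 / (n : ℝ)) * (∑ j, |(∑ i, F i j * σ i) + a j|)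
            + ε * ∑ i, |σ i|} :=
  stmt1_general p n F b a ε hε hne
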